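/- arXiv:2605.01814 — 5 statements merged into one kernel-verified Lean document; each statement's English description precedes it below -/
import Mathlib

section
/- Let c : ℝ → ℝ be differentiable and let u : ℝ × ℝ → ℝ be twice continuously differentiable on an open set Ω ⊆ ℝ² with c(u(t,x)) > 0 and u_tt(t,x) = c(u(t,x))² u_xx(t,x) for all (t,x) ∈ Ω. Then the Riemann variable S := u_t − c(u)u_x satisfies, at every point of Ω, S_t + c(u) S_x = (c'(u)/(2c(u))) · R · (S − R), where R := u_t + c(u)u_x. -/
/-!
Along the characteristic direction `(1, c)` every partial-derivative combination `F_t + c F_x` is the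
Fréchet derivative `DF (1, c)`. Differentiating `S = u_t - c(u) u_x` in that direction and using the
symmetry of the second derivative gives `S_t + c S_x = (u_tt - c² u_xx) - c'(u) u_x R`. The wave
equation removes the first term, and `u_x = (R - S) / (2c)` turns the second into the claimed form.
-/

open Topology

/-- Partial derivative in the first (time) variable. -/
noncomputable def pdt (u : ℝ × ℝ → ℝ) : ℝ × ℝ → ℝ :=
  fun p => deriv (fun s => u (s, p.2)) p.1

/-- Partial derivative in the second (space) variable. -/
noncomputable def pdx (u : ℝ × ℝ → ℝ) : ℝ × ℝ → ℝ :=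
  fun p => deriv (fun y => u (p.1, y)) p.2

/-- The Riemann variable `R = u_t + c(u) u_x`. -/
noncomputable def Rv (c : ℝ → ℝ) (u : ℝ × ℝ → ℝ) : ℝ × ℝ → ℝ :=
  fun p => pdt u p + c (u p) * pdx u p

/-- The Riemann variable `S = u_t - c(u) u_x`. -/
noncomputable def Sv (c : ℝ → ℝ) (u : ℝ × ℝ → ℝ) : ℝ × ℝ → ℝ :=
  fun p => pdt u p - c (u p) * pdx u p

section PartialDerivatives

variable {F : ℝ × ℝ → ℝ} {p : ℝ × ℝ}

lemma pdt_eq_fderiv (hF : DifferentiableAt ℝ F p) : pdt F p = fderiv ℝ F p (1, 0) :=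
  (hF.hasFDerivAt.comp_hasDerivAt_of_eq p.1
    ((hasDerivAt_id p.1).prodMk (hasDerivAt_const p.1 p.2)) rfl).deriv

lemma pdx_eq_fderiv (hF : DifferentiableAt ℝ F p) : pdx F p = fderiv ℝ F p (0, 1) :=
  (hF.hasFDerivAt.comp_hasDerivAt_of_eq p.2
    ((hasDerivAt_const p.2 p.1).prodMk (hasDerivAt_id p.2)) rfl).deriv

lemma pdt_add_mul_pdx (hF : DifferentiableAt ℝ F p) (a : ℝ) :
    pdt F p + a * pdx F p = fderiv ℝ F p (1, a) := by
  have hdir : ((1 : ℝ), a) = (1, 0) + a • (0, 1) := by simp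
  rw [pdt_eq_fderiv hF, pdx_eq_fderiv hF, hdir, map_add, map_smul, smul_eq_mul]

lemma pdt_eventuallyEq_fderiv (hF : ContDiffAt ℝ 1 F p) :
    pdt F =ᶠ[𝓝 p] fun q => fderiv ℝ F q (1, 0) := by
  filter_upwards [hF.eventually (by simp)] with q hq
  exact pdt_eq_fderiv (hq.differentiableAt one_ne_zero)

lemma pdx_eventuallyEq_fderiv (hF : ContDiffAt ℝ 1 F p) :
    pdx F =ᶠ[𝓝 p] fun q => fderiv ℝ F q (0, 1) := by
  filter_upwards [hF.eventually (by simp)] with q hq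
  exact pdx_eq_fderiv (hq.differentiableAt one_ne_zero)

lemma hasFDerivAt_fderiv_of_contDiffAt_two (hF : ContDiffAt ℝ 2 F p) :
    HasFDerivAt (fderiv ℝ F) (fderiv ℝ (fderiv ℝ F) p) p :=
  ((hF.fderiv_right (m := 1) one_add_one_eq_two.le).differentiableAt one_ne_zero).hasFDerivAt

lemma hasFDerivAt_pdt (hF : ContDiffAt ℝ 2 F p) :
    HasFDerivAt (pdt F) ((fderiv ℝ (fderiv ℝ F) p).flip (1, 0)) p :=
  ((ContinuousLinearMap.apply ℝ ℝ ((1 : ℝ), (0 : ℝ))).hasFDerivAt.comp p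
    (hasFDerivAt_fderiv_of_contDiffAt_two hF)).congr_of_eventuallyEq
    (pdt_eventuallyEq_fderiv (hF.of_le one_le_two))

lemma hasFDerivAt_pdx (hF : ContDiffAt ℝ 2 F p) :
    HasFDerivAt (pdx F) ((fderiv ℝ (fderiv ℝ F) p).flip (0, 1)) p :=
  ((ContinuousLinearMap.apply ℝ ℝ ((0 : ℝ), (1 : ℝ))).hasFDerivAt.comp p
    (hasFDerivAt_fderiv_of_contDiffAt_two hF)).congr_of_eventuallyEq
    (pdx_eventuallyEq_fderiv (hF.of_le one_le_two))

lemma pdx_pdt_eq_pdt_pdx (hF : ContDiffAt ℝ 2 F p) : pdx (pdt F) p = pdt (pdx F) p := by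
  rw [pdx_eq_fderiv (hasFDerivAt_pdt hF).differentiableAt, (hasFDerivAt_pdt hF).fderiv,
    pdt_eq_fderiv (hasFDerivAt_pdx hF).differentiableAt, (hasFDerivAt_pdx hF).fderiv]
  exact hF.isSymmSndFDerivAt (by simp) _ _

end PartialDerivatives

lemma pdt_Sv_add_mul_pdx_Sv {c : ℝ → ℝ} {u : ℝ × ℝ → ℝ} {p : ℝ × ℝ}
    (hc : DifferentiableAt ℝ c (u p)) (hu : ContDiffAt ℝ 2 u p) :
    pdt (Sv c u) p + c (u p) * pdx (Sv c u) p
      = pdt (pdt u) p - c (u p) ^ 2 * pdx (pdx u) p - deriv c (u p) * pdx u p * Rv c u p := by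
  have hu₁ : DifferentiableAt ℝ u p := hu.differentiableAt two_ne_zero
  have hut := (hasFDerivAt_pdt hu).differentiableAt
  have hux := (hasFDerivAt_pdx hu).differentiableAt
  have hcu : HasFDerivAt (fun q => c (u q)) (deriv c (u p) • fderiv ℝ u p) p :=
    hc.hasDerivAt.comp_hasFDerivAt p hu₁.hasFDerivAt
  have hS : HasFDerivAt (Sv c u)
      (fderiv ℝ (pdt u) p - (c (u p) • fderiv ℝ (pdx u) p
        + pdx u p • deriv c (u p) • fderiv ℝ u p)) p :=
    hut.hasFDerivAt.sub (hcu.mul hux.hasFDerivAt)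
  rw [pdt_add_mul_pdx hS.differentiableAt, hS.fderiv]
  simp only [sub_apply, add_apply, smul_apply, smul_eq_mul]
  rw [← pdt_add_mul_pdx hut, ← pdt_add_mul_pdx hux, ← pdt_add_mul_pdx hu₁,
    pdx_pdt_eq_pdt_pdx hu]
  simp only [Rv]
  ring

theorem stmt1 (c : ℝ → ℝ) (u : ℝ × ℝ → ℝ) (Ω : Set (ℝ × ℝ))
    (hΩ : IsOpen Ω)
    (hc : Differentiable ℝ c)
    (hu : ContDiffOn ℝ 2 u Ω)
    (hpos : ∀ p ∈ Ω, 0 < c (u p))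
    (hwave : ∀ p ∈ Ω, pdt (pdt u) p = (c (u p)) ^ 2 * pdx (pdx u) p) :
    ∀ p ∈ Ω,
      pdt (Sv c u) p + c (u p) * pdx (Sv c u) p
        = (deriv c (u p) / (2 * c (u p))) * Rv c u p * (Sv c u p - Rv c u p) := by
  intro p hp
  have hcp : c (u p) ≠ 0 := (hpos p hp).ne'
  have hux : pdx u p = (Rv c u p - Sv c u p) / (2 * c (u p)) := by
    field_simp
    simp only [Rv, Sv]
    ring
  rw [pdt_Sv_add_mul_pdx_Sv (hc (u p)) (hu.contDiffAt (hΩ.mem_nhds hp)), hwave p hp, hux]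
  field_simp
  ring
end

section
/- Let c : ℝ → ℝ be continuously differentiable and let u : ℝ × ℝ → ℝ be twice continuously differentiable on an open set Ω ⊆ ℝ² with c(u(t,x)) > 0 and u_tt = c(u)² u_xx on Ω. Then the weighted Riemann variable R/√(c(u)) satisfies, at every point of Ω, D₋( R/√(c(u)) ) = −( c'(u) / (2 c(u)^{3/2}) ) · S², where R := u_t + c(u)u_x, S := u_t − c(u)u_x and D₋F := F_t − c(u)F_x. In particular, if c'(θ) ≥ 0 for all θ, then D₋( R/√(c(u)) ) ≤ 0 on Ω. -/
open Topology

-- `charDeriv (c (u p)) F p` is `D₋F` at `p`.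
noncomputable def charDeriv (a : ℝ) (F : ℝ × ℝ → ℝ) (p : ℝ × ℝ) : ℝ :=
  pdt F p - a * pdx F p

section FirstOrder

variable {F G : ℝ × ℝ → ℝ} {L : ℝ × ℝ →L[ℝ] ℝ} {p : ℝ × ℝ}

theorem HasFDerivAt.pdt_eq (h : HasFDerivAt F L p) : pdt F p = L (1, 0) := by
  have hline : HasDerivAt (fun s : ℝ => (s, p.2)) ((1 : ℝ), (0 : ℝ)) p.1 :=
    (hasDerivAt_id p.1).prodMk (hasDerivAt_const p.1 p.2)
  exact (h.comp_hasDerivAt p.1 hline).deriv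

theorem HasFDerivAt.pdx_eq (h : HasFDerivAt F L p) : pdx F p = L (0, 1) := by
  have hline : HasDerivAt (fun y : ℝ => (p.1, y)) ((0 : ℝ), (1 : ℝ)) p.2 :=
    (hasDerivAt_const p.2 p.1).prodMk (hasDerivAt_id p.2)
  exact (h.comp_hasDerivAt p.2 hline).deriv

theorem HasFDerivAt.charDeriv_eq (h : HasFDerivAt F L p) (a : ℝ) :
    charDeriv a F p = L (1, -a) := by
  have hv : ((1 : ℝ), -a) = ((1 : ℝ), (0 : ℝ)) - a • ((0 : ℝ), (1 : ℝ)) := by simp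
  rw [charDeriv, h.pdt_eq, h.pdx_eq, hv, map_sub, map_smul, smul_eq_mul]

theorem charDeriv_add (hF : DifferentiableAt ℝ F p) (hG : DifferentiableAt ℝ G p) (a : ℝ) :
    charDeriv a (fun q => F q + G q) p = charDeriv a F p + charDeriv a G p := by
  have h : HasFDerivAt (fun q => F q + G q) _ p := hF.hasFDerivAt.add hG.hasFDerivAt
  rw [h.charDeriv_eq, hF.hasFDerivAt.charDeriv_eq, hG.hasFDerivAt.charDeriv_eq]
  rfl

theorem charDeriv_mul (hF : DifferentiableAt ℝ F p) (hG : DifferentiableAt ℝ G p) (a : ℝ) :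
    charDeriv a (fun q => F q * G q) p = charDeriv a F p * G p + F p * charDeriv a G p := by
  have h : HasFDerivAt (fun q => F q * G q) _ p := hF.hasFDerivAt.mul hG.hasFDerivAt
  rw [h.charDeriv_eq, hF.hasFDerivAt.charDeriv_eq, hG.hasFDerivAt.charDeriv_eq]
  simp only [add_apply, smul_apply, smul_eq_mul]
  ring

theorem charDeriv_comp {g : ℝ → ℝ} {g' : ℝ} (hg : HasDerivAt g g' (F p))
    (hF : DifferentiableAt ℝ F p) (a : ℝ) :
    charDeriv a (fun q => g (F q)) p = g' * charDeriv a F p := by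
  have h : HasFDerivAt (fun q => g (F q)) _ p := hg.comp_hasFDerivAt p hF.hasFDerivAt
  rw [h.charDeriv_eq, hF.hasFDerivAt.charDeriv_eq]
  rfl

theorem charDeriv_div_sqrt (hF : DifferentiableAt ℝ F p) (hG : DifferentiableAt ℝ G p)
    (hGp : 0 < G p) (a : ℝ) :
    charDeriv a (fun q => F q / √(G q)) p
      = charDeriv a F p / √(G p) - F p * charDeriv a G p / (2 * √(G p) ^ 3) := by
  have hs : 0 < √(G p) := Real.sqrt_pos.2 hGp
  have hinv : HasDerivAt (fun x => (√x)⁻¹) (-(1 / (2 * √(G p))) / √(G p) ^ 2) (G p) :=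
    (Real.hasDerivAt_sqrt hGp.ne').inv hs.ne'
  simp only [div_eq_mul_inv (F _)]
  have hinvG : DifferentiableAt ℝ (fun q => (√(G q))⁻¹) p := hinv.differentiableAt.comp p hG
  rw [charDeriv_mul hF hinvG, charDeriv_comp hinv hG]
  field_simp
  ring

end FirstOrder

section SecondOrder

variable {u : ℝ × ℝ → ℝ} {p : ℝ × ℝ}

theorem ContDiffAt.pdt_eventuallyEq (hu : ContDiffAt ℝ 2 u p) :
    pdt u =ᶠ[𝓝 p] fun q => fderiv ℝ u q (1, 0) :=
  (hu.eventually (by simp)).mono fun _ hq =>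
    (hq.differentiableAt two_ne_zero).hasFDerivAt.pdt_eq

theorem ContDiffAt.pdx_eventuallyEq (hu : ContDiffAt ℝ 2 u p) :
    pdx u =ᶠ[𝓝 p] fun q => fderiv ℝ u q (0, 1) :=
  (hu.eventually (by simp)).mono fun _ hq =>
    (hq.differentiableAt two_ne_zero).hasFDerivAt.pdx_eq

theorem ContDiffAt.hasFDerivAt_fderiv (hu : ContDiffAt ℝ 2 u p) :
    HasFDerivAt (fderiv ℝ u) (fderiv ℝ (fderiv ℝ u) p) p :=
  ((hu.fderiv_right (m := 1) le_rfl).differentiableAt one_ne_zero).hasFDerivAt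

theorem ContDiffAt.hasFDerivAt_pdt (hu : ContDiffAt ℝ 2 u p) :
    HasFDerivAt (pdt u)
      ((ContinuousLinearMap.apply ℝ ℝ ((1 : ℝ), (0 : ℝ))).comp (fderiv ℝ (fderiv ℝ u) p)) p := by
  have h := (ContinuousLinearMap.apply ℝ ℝ ((1 : ℝ), (0 : ℝ))).hasFDerivAt.comp p
    hu.hasFDerivAt_fderiv
  exact h.congr_of_eventuallyEq hu.pdt_eventuallyEq

theorem ContDiffAt.hasFDerivAt_pdx (hu : ContDiffAt ℝ 2 u p) :
    HasFDerivAt (pdx u)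
      ((ContinuousLinearMap.apply ℝ ℝ ((0 : ℝ), (1 : ℝ))).comp (fderiv ℝ (fderiv ℝ u) p)) p := by
  have h := (ContinuousLinearMap.apply ℝ ℝ ((0 : ℝ), (1 : ℝ))).hasFDerivAt.comp p
    hu.hasFDerivAt_fderiv
  exact h.congr_of_eventuallyEq hu.pdx_eventuallyEq

theorem ContDiffAt.pdx_pdt_eq (hu : ContDiffAt ℝ 2 u p) : pdx (pdt u) p = pdt (pdx u) p := by
  rw [hu.hasFDerivAt_pdt.pdx_eq, hu.hasFDerivAt_pdx.pdt_eq]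
  exact hu.isSymmSndFDerivAt (by simp) _ _

end SecondOrder

section Riemann

variable {c : ℝ → ℝ} {u : ℝ × ℝ → ℝ} {p : ℝ × ℝ}

theorem charDeriv_comp_eq_deriv_mul_Sv (hc : DifferentiableAt ℝ c (u p))
    (hu : DifferentiableAt ℝ u p) :
    charDeriv (c (u p)) (fun q => c (u q)) p = deriv c (u p) * Sv c u p :=
  charDeriv_comp hc.hasDerivAt hu _

theorem differentiableAt_Rv (hc : DifferentiableAt ℝ c (u p)) (hu : ContDiffAt ℝ 2 u p) :
    DifferentiableAt ℝ (Rv c u) p :=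
  hu.hasFDerivAt_pdt.differentiableAt.add
    ((hc.comp p (hu.differentiableAt two_ne_zero)).mul hu.hasFDerivAt_pdx.differentiableAt)

theorem charDeriv_Rv (hc : DifferentiableAt ℝ c (u p)) (hu : ContDiffAt ℝ 2 u p)
    (hwave : pdt (pdt u) p = c (u p) ^ 2 * pdx (pdx u) p) :
    charDeriv (c (u p)) (Rv c u) p = deriv c (u p) * pdx u p * Sv c u p := by
  have hut := hu.hasFDerivAt_pdt.differentiableAt
  have hux := hu.hasFDerivAt_pdx.differentiableAt
  have hcu : DifferentiableAt ℝ (fun q => c (u q)) p :=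
    hc.comp p (hu.differentiableAt two_ne_zero)
  have hcux : DifferentiableAt ℝ (fun q => c (u q) * pdx u q) p := hcu.mul hux
  unfold Rv
  rw [charDeriv_add hut hcux, charDeriv_mul hcu hux,
    charDeriv_comp_eq_deriv_mul_Sv hc (hu.differentiableAt two_ne_zero)]
  simp only [charDeriv]
  rw [hu.pdx_pdt_eq, hwave]
  ring

theorem charDeriv_Rv_div_sqrt (hc : DifferentiableAt ℝ c (u p)) (hu : ContDiffAt ℝ 2 u p)
    (hpos : 0 < c (u p)) (hwave : pdt (pdt u) p = c (u p) ^ 2 * pdx (pdx u) p) :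
    charDeriv (c (u p)) (fun q => Rv c u q / √(c (u q))) p
      = -(deriv c (u p) / (2 * c (u p) ^ ((3 : ℝ) / 2))) * Sv c u p ^ 2 := by
  have hcu : DifferentiableAt ℝ (fun q => c (u q)) p :=
    hc.comp p (hu.differentiableAt two_ne_zero)
  have hrpow : c (u p) ^ ((3 : ℝ) / 2) = √(c (u p)) ^ 3 := by
    rw [Real.sqrt_eq_rpow, ← Real.rpow_natCast, ← Real.rpow_mul hpos.le]
    norm_num
  have hsq : √(c (u p)) ^ 2 = c (u p) := Real.sq_sqrt hpos.le
  have hs : 0 < √(c (u p)) := Real.sqrt_pos.2 hpos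
  rw [charDeriv_div_sqrt (differentiableAt_Rv hc hu) hcu hpos, charDeriv_Rv hc hu hwave,
    charDeriv_comp_eq_deriv_mul_Sv hc (hu.differentiableAt two_ne_zero), hrpow]
  simp only [Rv, Sv]
  generalize √(c (u p)) = s at hs hsq ⊢
  rw [← hsq]
  field_simp
  ring

end Riemann

theorem stmt2 (c : ℝ → ℝ) (u : ℝ × ℝ → ℝ) (Ω : Set (ℝ × ℝ))
    (hΩ : IsOpen Ω)
    (hc : ContDiff ℝ 1 c)
    (hu : ContDiffOn ℝ 2 u Ω)
    (hpos : ∀ p ∈ Ω, 0 < c (u p))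
    (hwave : ∀ p ∈ Ω, pdt (pdt u) p = (c (u p)) ^ 2 * pdx (pdx u) p) :
    ∀ p ∈ Ω,
      (pdt (fun q => Rv c u q / Real.sqrt (c (u q))) p
          - c (u p) * pdx (fun q => Rv c u q / Real.sqrt (c (u q))) p
        = -(deriv c (u p) / (2 * (c (u p)) ^ ((3 : ℝ) / 2))) * (Sv c u p) ^ 2)
      ∧ ((∀ θ, 0 ≤ deriv c θ) →
          pdt (fun q => Rv c u q / Real.sqrt (c (u q))) p
            - c (u p) * pdx (fun q => Rv c u q / Real.sqrt (c (u q))) p ≤ 0) := by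
  intro p hp
  have key := charDeriv_Rv_div_sqrt (hc.differentiable one_ne_zero (u p))
    (hu.contDiffAt (hΩ.mem_nhds hp)) (hpos p hp) (hwave p hp)
  unfold charDeriv at key
  refine ⟨key, fun hmono => ?_⟩
  rw [key]
  have hcoef : 0 ≤ deriv c (u p) / (2 * c (u p) ^ ((3 : ℝ) / 2)) :=
    div_nonneg (hmono _) (mul_pos two_pos (Real.rpow_pos_of_pos (hpos p hp) _)).le
  exact mul_nonpos_of_nonpos_of_nonneg (neg_nonpos.2 hcoef) (sq_nonneg _)
end

section
/- Let c : ℝ → ℝ be continuously differentiable and let u : ℝ × ℝ → ℝ be twice continuously differentiable on an open set Ω ⊆ ℝ² with c(u(t,x)) > 0 and u_tt = c(u)² u_xx on Ω. Then the weighted Riemann variable S/√(c(u)) satisfies, at every point of Ω, D₊( S/√(c(u)) ) = −( c'(u) / (2 c(u)^{3/2}) ) · R², where R := u_t + c(u)u_x, S := u_t − c(u)u_x and D₊F := F_t + c(u)F_x. In particular, if c'(θ) ≥ 0 for all θ, then D₊( S/√(c(u)) ) ≤ 0 on Ω. -/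
lemma pdt_eqL {F : ℝ × ℝ → ℝ} {L : ℝ × ℝ →L[ℝ] ℝ} {p : ℝ × ℝ}
    (h : HasFDerivAt F L p) : pdt F p = L (1, 0) := by
  have h2 : HasDerivAt (fun s : ℝ => ((s, p.2) : ℝ × ℝ)) ((1:ℝ), (0:ℝ)) p.1 :=
    HasDerivAt.prodMk (hasDerivAt_id p.1) (hasDerivAt_const p.1 p.2)
  exact (HasFDerivAt.comp_hasDerivAt (f := fun s : ℝ => ((s, p.2) : ℝ × ℝ)) (x := p.1) h h2).deriv

lemma pdx_eqL {F : ℝ × ℝ → ℝ} {L : ℝ × ℝ →L[ℝ] ℝ} {p : ℝ × ℝ}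
    (h : HasFDerivAt F L p) : pdx F p = L (0, 1) := by
  have h2 : HasDerivAt (fun y : ℝ => ((p.1, y) : ℝ × ℝ)) ((0:ℝ), (1:ℝ)) p.2 :=
    HasDerivAt.prodMk (hasDerivAt_const p.2 p.1) (hasDerivAt_id p.2)
  exact (HasFDerivAt.comp_hasDerivAt (f := fun y : ℝ => ((p.1, y) : ℝ × ℝ)) (x := p.2) h h2).deriv

lemma pdt_congr {F G : ℝ × ℝ → ℝ} {p : ℝ × ℝ} (h : F =ᶠ[nhds p] G) :
    pdt F p = pdt G p :=
  Filter.EventuallyEq.deriv_eq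
    (h.comp_tendsto ((continuous_id.prodMk continuous_const).tendsto p.1))

lemma pdx_congr {F G : ℝ × ℝ → ℝ} {p : ℝ × ℝ} (h : F =ᶠ[nhds p] G) :
    pdx F p = pdx G p :=
  Filter.EventuallyEq.deriv_eq
    (h.comp_tendsto ((continuous_const.prodMk continuous_id).tendsto p.2))

theorem stmt3 (c : ℝ → ℝ) (u : ℝ × ℝ → ℝ) (Ω : Set (ℝ × ℝ))
    (hΩ : IsOpen Ω)
    (hc : ContDiff ℝ 1 c)
    (hu : ContDiffOn ℝ 2 u Ω)
    (hpos : ∀ p ∈ Ω, 0 < c (u p))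
    (hwave : ∀ p ∈ Ω, pdt (pdt u) p = (c (u p)) ^ 2 * pdx (pdx u) p) :
    ∀ p ∈ Ω,
      (pdt (fun q => Sv c u q / Real.sqrt (c (u q))) p
          + c (u p) * pdx (fun q => Sv c u q / Real.sqrt (c (u q))) p
        = -(deriv c (u p) / (2 * (c (u p)) ^ ((3 : ℝ) / 2))) * (Rv c u p) ^ 2)
      ∧ ((∀ θ, 0 ≤ deriv c θ) →
          pdt (fun q => Sv c u q / Real.sqrt (c (u q))) p
            + c (u p) * pdx (fun q => Sv c u q / Real.sqrt (c (u q))) p ≤ 0) := by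
  intro p hp
  have hpΩ : Ω ∈ nhds p := hΩ.mem_nhds hp
  have hp2 : ContDiffAt ℝ 2 u p := hu.contDiffAt hpΩ
  have hcu : 0 < c (u p) := hpos p hp
  have hs : 0 < Real.sqrt (c (u p)) := Real.sqrt_pos.mpr hcu
  -- fderiv of u is C¹ on Ω
  have hφΩ : ContDiffOn ℝ 1 (fderiv ℝ u) Ω :=
    ((contDiffOn_succ_iff_fderiv_of_isOpen hΩ).mp (by exact_mod_cast hu)).2.2
  have hφp : ContDiffAt ℝ 1 (fderiv ℝ u) p := hφΩ.contDiffAt hpΩ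
  have hA : HasFDerivAt (fderiv ℝ u) (fderiv ℝ (fderiv ℝ u) p) p :=
    (hφp.differentiableAt one_ne_zero).hasFDerivAt
  have hsym : fderiv ℝ (fderiv ℝ u) p ((0:ℝ),(1:ℝ)) ((1:ℝ),(0:ℝ))
      = fderiv ℝ (fderiv ℝ u) p ((1:ℝ),(0:ℝ)) ((0:ℝ),(1:ℝ)) :=
    hp2.isSymmSndFDerivAt (by simp [minSmoothness_of_isRCLikeNormedField]) _ _
  -- the nice versions of pdt u / pdx u
  set ut : ℝ × ℝ → ℝ := fun q => fderiv ℝ u q (1, 0) with hut_def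
  set ux : ℝ × ℝ → ℝ := fun q => fderiv ℝ u q (0, 1) with hux_def
  have hdiff : ∀ q ∈ Ω, HasFDerivAt u (fderiv ℝ u q) q := fun q hq =>
    ((hu.contDiffAt (hΩ.mem_nhds hq)).differentiableAt two_ne_zero).hasFDerivAt
  have hutΩ : ∀ q ∈ Ω, pdt u q = ut q := fun q hq => pdt_eqL (hdiff q hq)
  have huxΩ : ∀ q ∈ Ω, pdx u q = ux q := fun q hq => pdx_eqL (hdiff q hq)
  -- derivatives of ut, ux
  have h_ut : HasFDerivAt ut ((ContinuousLinearMap.apply ℝ ℝ ((1:ℝ),(0:ℝ))).comp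
      (fderiv ℝ (fderiv ℝ u) p)) p :=
    (ContinuousLinearMap.apply ℝ ℝ ((1:ℝ),(0:ℝ))).hasFDerivAt.comp p hA
  have h_ux : HasFDerivAt ux ((ContinuousLinearMap.apply ℝ ℝ ((0:ℝ),(1:ℝ))).comp
      (fderiv ℝ (fderiv ℝ u) p)) p :=
    (ContinuousLinearMap.apply ℝ ℝ ((0:ℝ),(1:ℝ))).hasFDerivAt.comp p hA
  -- derivative of c ∘ u
  have hDu : HasFDerivAt u (fderiv ℝ u p) p := hdiff p hp
  have hcd : HasDerivAt c (deriv c (u p)) (u p) :=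
    ((hc.differentiable one_ne_zero) (u p)).hasDerivAt
  have hcu' : HasFDerivAt (fun q => c (u q)) (deriv c (u p) • fderiv ℝ u p) p :=
    hcd.comp_hasFDerivAt p hDu
  -- derivative of (√(c ∘ u))⁻¹
  have hsq : HasDerivAt (fun y => Real.sqrt (c y))
      (1 / (2 * Real.sqrt (c (u p))) * deriv c (u p)) (u p) :=
    (Real.hasDerivAt_sqrt hcu.ne').comp (u p) hcd
  have hinv0 : HasDerivAt (fun y => (Real.sqrt (c y))⁻¹)
      (-(1 / (2 * Real.sqrt (c (u p))) * deriv c (u p)) / Real.sqrt (c (u p)) ^ 2) (u p) :=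
    hsq.inv hs.ne'
  have hinv : HasFDerivAt (fun q => (Real.sqrt (c (u q)))⁻¹)
      ((-(1 / (2 * Real.sqrt (c (u p))) * deriv c (u p)) / Real.sqrt (c (u p)) ^ 2)
        • fderiv ℝ u p) p :=
    hinv0.comp_hasFDerivAt p hDu
  -- derivative of the nice S function
  have hS : HasFDerivAt (fun q => ut q - c (u q) * ux q)
      (((ContinuousLinearMap.apply ℝ ℝ ((1:ℝ),(0:ℝ))).comp (fderiv ℝ (fderiv ℝ u) p))
        - (c (u p) • ((ContinuousLinearMap.apply ℝ ℝ ((0:ℝ),(1:ℝ))).comp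
            (fderiv ℝ (fderiv ℝ u) p))
           + ux p • (deriv c (u p) • fderiv ℝ u p))) p :=
    h_ut.sub (hcu'.mul h_ux)
  -- derivative of the full function
  have hG : HasFDerivAt (fun q => (ut q - c (u q) * ux q) * (Real.sqrt (c (u q)))⁻¹)
      ((ut p - c (u p) * ux p) •
          ((-(1 / (2 * Real.sqrt (c (u p))) * deriv c (u p)) / Real.sqrt (c (u p)) ^ 2)
            • fderiv ℝ u p)
        + (Real.sqrt (c (u p)))⁻¹ •
          (((ContinuousLinearMap.apply ℝ ℝ ((1:ℝ),(0:ℝ))).comp (fderiv ℝ (fderiv ℝ u) p))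
            - (c (u p) • ((ContinuousLinearMap.apply ℝ ℝ ((0:ℝ),(1:ℝ))).comp
                (fderiv ℝ (fderiv ℝ u) p))
               + ux p • (deriv c (u p) • fderiv ℝ u p)))) p :=
    hS.mul hinv
  -- the target function agrees with the nice one near p
  have hGG' : (fun q => Sv c u q / Real.sqrt (c (u q)))
      =ᶠ[nhds p] (fun q => (ut q - c (u q) * ux q) * (Real.sqrt (c (u q)))⁻¹) := by
    filter_upwards [hpΩ] with q hq
    simp [Sv, hutΩ q hq, huxΩ q hq, div_eq_mul_inv]
  -- pdt u and pdx u agree with ut, ux near p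
  have hutE : pdt u =ᶠ[nhds p] ut := by filter_upwards [hpΩ] with q hq using hutΩ q hq
  have huxE : pdx u =ᶠ[nhds p] ux := by filter_upwards [hpΩ] with q hq using huxΩ q hq
  -- wave equation in terms of second fderiv
  have hW : fderiv ℝ (fderiv ℝ u) p ((1:ℝ),(0:ℝ)) ((1:ℝ),(0:ℝ))
      = c (u p) ^ 2 * fderiv ℝ (fderiv ℝ u) p ((0:ℝ),(1:ℝ)) ((0:ℝ),(1:ℝ)) := by
    have hw := hwave p hp
    rw [pdt_congr hutE, pdt_eqL h_ut] at hw
    rw [pdx_congr huxE, pdx_eqL h_ux] at hw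
    simpa using hw
  -- R at p
  have hR : Rv c u p = ut p + c (u p) * ux p := by
    rw [Rv, hutΩ p hp, huxΩ p hp]
  -- compute the LHS
  have hL : pdt (fun q => Sv c u q / Real.sqrt (c (u q))) p
      + c (u p) * pdx (fun q => Sv c u q / Real.sqrt (c (u q))) p
      = -(deriv c (u p) / (2 * (c (u p)) ^ ((3 : ℝ) / 2))) * (Rv c u p) ^ 2 := by
    rw [pdt_congr hGG', pdx_congr hGG', pdt_eqL hG, pdx_eqL hG, hR]
    simp only [ContinuousLinearMap.add_apply, ContinuousLinearMap.sub_apply,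
      ContinuousLinearMap.smul_apply, ContinuousLinearMap.comp_apply,
      ContinuousLinearMap.apply_apply, smul_eq_mul]
    rw [hsym, hW]
    have hrw : (c (u p)) ^ ((3 : ℝ) / 2) = c (u p) * Real.sqrt (c (u p)) := by
      rw [show (3 : ℝ) / 2 = 1 + 1 / 2 by norm_num, Real.rpow_add hcu, Real.rpow_one,
        Real.sqrt_eq_rpow]
    rw [hrw]
    have hs2 : Real.sqrt (c (u p)) ^ 2 = c (u p) := Real.sq_sqrt hcu.le
    rw [← hs2, hut_def, hux_def]
    field_simp
    rw [Real.sqrt_sq hs.le]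
    ring
  refine ⟨hL, fun hcp => ?_⟩
  rw [hL]
  have h1 : 0 < (c (u p)) ^ ((3 : ℝ) / 2) := Real.rpow_pos_of_pos hcu _
  have : 0 ≤ deriv c (u p) / (2 * (c (u p)) ^ ((3 : ℝ) / 2)) :=
    div_nonneg (hcp _) (by positivity)
  have h2 : 0 ≤ (Rv c u p) ^ 2 := sq_nonneg _
  nlinarith
end

section
/- Let c : ℝ → ℝ be continuously differentiable with c(θ) > 0 and c'(θ) ≥ 0 for all θ, let T > 0, and let u : ℝ × ℝ → ℝ be twice continuously differentiable solving u_tt = c(u)² u_xx on [0,T] × ℝ. Let t ∈ (0,T] and let x₊ : [0,t] → ℝ be differentiable with x₊'(τ) = +c(u(τ, x₊(τ))) for all τ ∈ [0,t]. Then the function τ ↦ S(τ, x₊(τ)) / √( c(u(τ, x₊(τ))) ) is nonincreasing (antitone) on [0,t], where S := u_t − c(u)u_x. -/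
/-!
Along a plus-characteristic, the wave equation and the symmetry of second derivatives give
`dS/dτ = -c'(u) u_x R`, while `d c(u)/dτ = c'(u) R`. The quotient rule then
gives `d/dτ (S / √c(u)) = -c'(u) R² / (2 c(u)^{3/2})`, because `2 c u_x + S = R`;
this is nonpositive as soon as `c' ≥ 0`.
-/

open Set

lemma pdt_eq_of_hasFDerivAt {u : ℝ × ℝ → ℝ} {L : ℝ × ℝ →L[ℝ] ℝ} {p : ℝ × ℝ}
    (h : HasFDerivAt u L p) : pdt u p = L (1, 0) :=
  (h.comp_hasDerivAt p.1 ((hasDerivAt_id p.1).prodMk (hasDerivAt_const p.1 p.2))).deriv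

lemma pdx_eq_of_hasFDerivAt {u : ℝ × ℝ → ℝ} {L : ℝ × ℝ →L[ℝ] ℝ} {p : ℝ × ℝ}
    (h : HasFDerivAt u L p) : pdx u p = L (0, 1) :=
  (h.comp_hasDerivAt p.2 ((hasDerivAt_const p.2 p.1).prodMk (hasDerivAt_id p.2))).deriv

lemma pdt_eq_fderiv_s5 {u : ℝ × ℝ → ℝ} (hu : Differentiable ℝ u) :
    pdt u = fun p => fderiv ℝ u p (1, 0) :=
  funext fun p => pdt_eq_of_hasFDerivAt (hu p).hasFDerivAt

lemma pdx_eq_fderiv_s5 {u : ℝ × ℝ → ℝ} (hu : Differentiable ℝ u) :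
    pdx u = fun p => fderiv ℝ u p (0, 1) :=
  funext fun p => pdx_eq_of_hasFDerivAt (hu p).hasFDerivAt

lemma contDiff_pdt {u : ℝ × ℝ → ℝ} {n : WithTop ℕ∞} (hu : ContDiff ℝ (n + 1) u) :
    ContDiff ℝ n (pdt u) := by
  rw [pdt_eq_fderiv_s5 (hu.differentiable (by simp))]
  exact (hu.fderiv_right le_rfl).clm_apply contDiff_const

lemma contDiff_pdx {u : ℝ × ℝ → ℝ} {n : WithTop ℕ∞} (hu : ContDiff ℝ (n + 1) u) :
    ContDiff ℝ n (pdx u) := by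
  rw [pdx_eq_fderiv_s5 (hu.differentiable (by simp))]
  exact (hu.fderiv_right le_rfl).clm_apply contDiff_const

lemma hasFDerivAt_fderiv_apply {E F : Type*} [NormedAddCommGroup E] [NormedSpace ℝ E]
    [NormedAddCommGroup F] [NormedSpace ℝ F] {u : E → F} {p : E}
    (hu : DifferentiableAt ℝ (fderiv ℝ u) p) (v : E) :
    HasFDerivAt (fun q => fderiv ℝ u q v) ((fderiv ℝ (fderiv ℝ u) p).flip v) p := by
  simpa using hu.hasFDerivAt.clm_apply (hasFDerivAt_const v p)

lemma pdx_pdt_eq_pdt_pdx_s5 {u : ℝ × ℝ → ℝ} (hu : ContDiff ℝ 2 u) (p : ℝ × ℝ) :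
    pdx (pdt u) p = pdt (pdx u) p := by
  have hu' : Differentiable ℝ u := hu.differentiable (by simp)
  have hD : DifferentiableAt ℝ (fderiv ℝ u) p :=
    (hu.fderiv_right (m := 1) le_rfl).differentiable (by simp) p
  rw [pdt_eq_fderiv_s5 hu', pdx_eq_fderiv_s5 hu',
    pdx_eq_of_hasFDerivAt (hasFDerivAt_fderiv_apply hD _),
    pdt_eq_of_hasFDerivAt (hasFDerivAt_fderiv_apply hD _)]
  exact hu.contDiffAt.isSymmSndFDerivAt (by simp) _ _

lemma hasDerivAt_comp_graph {f : ℝ × ℝ → ℝ} {x : ℝ → ℝ} {a τ : ℝ}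
    (hf : DifferentiableAt ℝ f (τ, x τ)) (hx : HasDerivAt x a τ) :
    HasDerivAt (fun σ => f (σ, x σ)) (pdt f (τ, x τ) + a * pdx f (τ, x τ)) τ := by
  have h := hf.hasFDerivAt.comp_hasDerivAt τ ((hasDerivAt_id τ).prodMk hx)
  have hsplit : ((1 : ℝ), a) = ((1 : ℝ), (0 : ℝ)) + a • ((0 : ℝ), (1 : ℝ)) := by simp
  rw [hsplit, map_add, map_smul, smul_eq_mul] at h
  rwa [pdt_eq_of_hasFDerivAt hf.hasFDerivAt, pdx_eq_of_hasFDerivAt hf.hasFDerivAt]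

lemma HasDerivAt.div_sqrt {f g : ℝ → ℝ} {f' g' τ : ℝ} (hf : HasDerivAt f f' τ)
    (hg : HasDerivAt g g' τ) (hpos : 0 < g τ) :
    HasDerivAt (fun σ => f σ / √(g σ))
      ((2 * g τ * f' - f τ * g') / (2 * g τ * √(g τ))) τ := by
  have hsqrt : 0 < √(g τ) := Real.sqrt_pos.2 hpos
  refine (hf.div (hg.sqrt hpos.ne') hsqrt.ne').congr_deriv ?_
  field_simp
  rw [Real.sq_sqrt hpos.le]
  ring

section PlusCharacteristic

variable {c : ℝ → ℝ} {u : ℝ × ℝ → ℝ} {xp : ℝ → ℝ} {τ : ℝ}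

lemma hasDerivAt_Sv_comp_plusChar (hc : DifferentiableAt ℝ c (u (τ, xp τ)))
    (hu : ContDiff ℝ 2 u)
    (hwave : pdt (pdt u) (τ, xp τ) = c (u (τ, xp τ)) ^ 2 * pdx (pdx u) (τ, xp τ))
    (hxp : HasDerivAt xp (c (u (τ, xp τ))) τ) :
    HasDerivAt (fun σ => Sv c u (σ, xp σ))
      (-(deriv c (u (τ, xp τ)) * pdx u (τ, xp τ) * Rv c u (τ, xp τ))) τ := by
  have hU := hasDerivAt_comp_graph (hu.differentiable (by simp) _) hxp
  have hUt := hasDerivAt_comp_graph ((contDiff_pdt (n := 1) hu).differentiable (by simp) _) hxp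
  have hUx := hasDerivAt_comp_graph ((contDiff_pdx (n := 1) hu).differentiable (by simp) _) hxp
  refine (hUt.sub ((hc.hasDerivAt.comp τ hU).mul hUx)).congr_deriv ?_
  rw [pdx_pdt_eq_pdt_pdx_s5 hu, hwave, Rv, Function.comp_apply]
  ring

lemma hasDerivAt_Sv_div_sqrt_comp_plusChar (hc : DifferentiableAt ℝ c (u (τ, xp τ)))
    (hcpos : 0 < c (u (τ, xp τ))) (hu : ContDiff ℝ 2 u)
    (hwave : pdt (pdt u) (τ, xp τ) = c (u (τ, xp τ)) ^ 2 * pdx (pdx u) (τ, xp τ))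
    (hxp : HasDerivAt xp (c (u (τ, xp τ))) τ) :
    HasDerivAt (fun σ => Sv c u (σ, xp σ) / √(c (u (σ, xp σ))))
      (-(deriv c (u (τ, xp τ)) * Rv c u (τ, xp τ) ^ 2) /
        (2 * c (u (τ, xp τ)) * √(c (u (τ, xp τ))))) τ := by
  have hC : HasDerivAt (fun σ => c (u (σ, xp σ))) (deriv c (u (τ, xp τ)) * Rv c u (τ, xp τ)) τ :=
    hc.hasDerivAt.comp τ (hasDerivAt_comp_graph (hu.differentiable (by simp) _) hxp)
  refine ((hasDerivAt_Sv_comp_plusChar hc hu hwave hxp).div_sqrt hC hcpos).congr_deriv ?_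
  rw [Sv, Rv]
  ring

end PlusCharacteristic

theorem stmt5_general (c : ℝ → ℝ) (u : ℝ × ℝ → ℝ) (T t : ℝ) (xp : ℝ → ℝ)
    (hc : ContDiff ℝ 1 c)
    (hcpos : ∀ θ, 0 < c θ)
    (hcmono : ∀ θ, 0 ≤ deriv c θ)
    (hu : ContDiff ℝ 2 u)
    (hwave : ∀ p : ℝ × ℝ, p.1 ∈ Set.Icc 0 T →
      pdt (pdt u) p = (c (u p)) ^ 2 * pdx (pdx u) p)
    (ht : t ∈ Set.Ioc 0 T)
    (hxp : ∀ τ ∈ Set.Icc 0 t, HasDerivAt xp (c (u (τ, xp τ))) τ) :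
    AntitoneOn (fun τ => Sv c u (τ, xp τ) / Real.sqrt (c (u (τ, xp τ)))) (Set.Icc 0 t) := by
  have hderiv : ∀ τ ∈ Icc 0 t, HasDerivAt
      (fun σ => Sv c u (σ, xp σ) / √(c (u (σ, xp σ))))
      (-(deriv c (u (τ, xp τ)) * Rv c u (τ, xp τ) ^ 2) /
        (2 * c (u (τ, xp τ)) * √(c (u (τ, xp τ))))) τ := fun τ hτ =>
    hasDerivAt_Sv_div_sqrt_comp_plusChar (hc.differentiable one_ne_zero _) (hcpos _) hu
      (hwave _ ⟨hτ.1, hτ.2.trans ht.2⟩) (hxp τ hτ)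
  refine antitoneOn_of_hasDerivWithinAt_nonpos (convex_Icc 0 t)
    (fun τ hτ => (hderiv τ hτ).continuousAt.continuousWithinAt)
    (fun τ hτ => (hderiv τ (interior_subset hτ)).hasDerivWithinAt) fun τ _ => ?_
  have hcτ := hcpos (u (τ, xp τ))
  exact div_nonpos_of_nonpos_of_nonneg (neg_nonpos.2 (mul_nonneg (hcmono _) (sq_nonneg _)))
    (by positivity)

theorem stmt5 (c : ℝ → ℝ) (u : ℝ × ℝ → ℝ) (T t : ℝ) (xp : ℝ → ℝ)
    (hc : ContDiff ℝ 1 c)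
    (hcpos : ∀ θ, 0 < c θ)
    (hcmono : ∀ θ, 0 ≤ deriv c θ)
    (hT : 0 < T)
    (hu : ContDiff ℝ 2 u)
    (hwave : ∀ p : ℝ × ℝ, p.1 ∈ Set.Icc 0 T →
      pdt (pdt u) p = (c (u p)) ^ 2 * pdx (pdx u) p)
    (ht : t ∈ Set.Ioc 0 T)
    (hxp : ∀ τ ∈ Set.Icc 0 t, HasDerivAt xp (c (u (τ, xp τ))) τ) :
    AntitoneOn (fun τ => Sv c u (τ, xp τ) / Real.sqrt (c (u (τ, xp τ)))) (Set.Icc 0 t) :=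
  stmt5_general c u T t xp hc hcpos hcmono hu hwave ht hxp
end

section
/- Let c : ℝ → ℝ be continuously differentiable with 0 < c_* ≤ c(θ) ≤ c^* and c'(θ) ≥ 0 for all θ, let T > 0, and let u : ℝ × ℝ → ℝ be twice continuously differentiable solving u_tt = c(u)² u_xx on [0,T] × ℝ. Set R₀(z) := u_t(0,z) + c(u(0,z)) u_x(0,z) and suppose M := sup_{z ∈ ℝ} max(R₀(z), 0) is finite. Let (t,x₀) ∈ (0,T] × ℝ and suppose there exists a differentiable curve x₋ : [0,t] → ℝ with x₋'(τ) = −c(u(τ, x₋(τ))) for all τ and x₋(t) = x₀. Then R(t,x₀) ≤ √(c^*/c_*) · M, where R := u_t + c(u)u_x. -/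
lemma pdt_eq' {f : ℝ × ℝ → ℝ} {p : ℝ × ℝ} (hf : DifferentiableAt ℝ f p) :
    pdt f p = fderiv ℝ f p (1, 0) := by
  have hγ : HasDerivAt (fun s : ℝ => (s, p.2)) ((1:ℝ), (0:ℝ)) p.1 :=
    (hasDerivAt_id _).prodMk (hasDerivAt_const _ _)
  exact (hf.hasFDerivAt.comp_hasDerivAt p.1 hγ).deriv

lemma pdx_eq' {f : ℝ × ℝ → ℝ} {p : ℝ × ℝ} (hf : DifferentiableAt ℝ f p) :
    pdx f p = fderiv ℝ f p (0, 1) := by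
  have hγ : HasDerivAt (fun y : ℝ => (p.1, y)) ((0:ℝ), (1:ℝ)) p.2 :=
    (hasDerivAt_const _ _).prodMk (hasDerivAt_id _)
  exact (hf.hasFDerivAt.comp_hasDerivAt p.2 hγ).deriv

lemma hasDerivAt_curve' {f : ℝ × ℝ → ℝ} {xm : ℝ → ℝ} {τ m : ℝ}
    (hf : DifferentiableAt ℝ f (τ, xm τ)) (hxm : HasDerivAt xm m τ) :
    HasDerivAt (fun s => f (s, xm s))
      (fderiv ℝ f (τ, xm τ) (1, 0) + m * fderiv ℝ f (τ, xm τ) (0, 1)) τ := by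
  have hγ : HasDerivAt (fun s : ℝ => (s, xm s)) ((1:ℝ), m) τ :=
    (hasDerivAt_id _).prodMk hxm
  have h := hf.hasFDerivAt.comp_hasDerivAt τ hγ
  have e : ((1:ℝ), m) = ((1:ℝ), (0:ℝ)) + m • ((0:ℝ), (1:ℝ)) := by
    simp [Prod.ext_iff]
  rw [e, map_add, map_smul] at h
  simpa [smul_eq_mul, Function.comp_def] using h

lemma fderiv_fderiv_apply' {u : ℝ × ℝ → ℝ} (hu : ContDiff ℝ 2 u) (v w p : ℝ × ℝ) :
    fderiv ℝ (fun q => fderiv ℝ u q v) p w = fderiv ℝ (fderiv ℝ u) p w v := by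
  have hd : DifferentiableAt ℝ (fderiv ℝ u) p :=
    ((hu.fderiv_right (m := 1) (by norm_num)).differentiable (by norm_num)) p
  rw [fderiv_clm_apply hd (differentiableAt_const v)]
  simp

lemma gderiv (c : ℝ → ℝ) (u : ℝ × ℝ → ℝ) (clow : ℝ) (xm : ℝ → ℝ) (τ : ℝ)
    (hc : ContDiff ℝ 1 c) (hclow : 0 < clow) (hcbd : ∀ θ, clow ≤ c θ)
    (hcmono : ∀ θ, 0 ≤ deriv c θ)
    (hu : ContDiff ℝ 2 u)
    (hwave : pdt (pdt u) (τ, xm τ) = (c (u (τ, xm τ)))^2 * pdx (pdx u) (τ, xm τ))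
    (hxm : HasDerivAt xm (-(c (u (τ, xm τ)))) τ) :
    ∃ d, d ≤ 0 ∧
      HasDerivAt (fun s => Rv c u (s, xm s) / Real.sqrt (c (u (s, xm s)))) d τ := by
  set p : ℝ × ℝ := (τ, xm τ) with hp
  have hdu : Differentiable ℝ u := hu.differentiable (by norm_num)
  have hut_cd : ContDiff ℝ 1 (fun q => fderiv ℝ u q (1, 0)) :=
    (hu.fderiv_right (by norm_num)).clm_apply contDiff_const
  have hux_cd : ContDiff ℝ 1 (fun q => fderiv ℝ u q (0, 1)) :=
    (hu.fderiv_right (by norm_num)).clm_apply contDiff_const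
  set utp : ℝ := fderiv ℝ u p (1, 0) with hutp
  set uxp : ℝ := fderiv ℝ u p (0, 1) with huxp
  set cc : ℝ := c (u p) with hccdef
  have hcc0 : 0 < cc := lt_of_lt_of_le hclow (hcbd _)
  set cp : ℝ := deriv c (u p) with hcp
  have hcp0 : 0 ≤ cp := hcmono _
  set A := fderiv ℝ (fderiv ℝ u) p with hA
  -- second partials
  have hsym : A (0,1) (1,0) = A (1,0) (0,1) :=
    (hu.contDiffAt (x := p)).isSymmSndFDerivAt (by norm_num) _ _
  -- rewrite wave equation
  have e1 : pdt u = fun q => fderiv ℝ u q (1, 0) :=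
    funext fun q => pdt_eq' (hdu q)
  have e2 : pdx u = fun q => fderiv ℝ u q (0, 1) :=
    funext fun q => pdx_eq' (hdu q)
  have hwaveA : A (1,0) (1,0) = cc ^ 2 * A (0,1) (0,1) := by
    have h1 : pdt (pdt u) p = A (1,0) (1,0) := by
      rw [e1, pdt_eq' ((hut_cd.differentiable (by norm_num)) p),
        fderiv_fderiv_apply' hu]
    have h2 : pdx (pdx u) p = A (0,1) (0,1) := by
      rw [e2, pdx_eq' ((hux_cd.differentiable (by norm_num)) p),
        fderiv_fderiv_apply' hu]
    rw [← h1, ← h2]; exact hwave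
  -- derivatives along the curve
  have hU' : HasDerivAt (fun s => u (s, xm s)) (utp + -cc * uxp) τ :=
    hasDerivAt_curve' (hdu p) hxm
  have hcderiv : HasDerivAt c cp (u p) :=
    ((hc.differentiable (by norm_num)) (u p)).hasDerivAt
  have hcU : HasDerivAt (fun s => c (u (s, xm s))) (cp * (utp + -cc * uxp)) τ :=
    hcderiv.comp τ hU'
  have h1 : HasDerivAt (fun s => fderiv ℝ u (s, xm s) (1, 0))
      (A (1,0) (1,0) + -cc * A (0,1) (1,0)) τ := by
    have := hasDerivAt_curve' (f := fun q => fderiv ℝ u q (1, 0))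
      ((hut_cd.differentiable (by norm_num)) p) hxm
    rwa [fderiv_fderiv_apply' hu, fderiv_fderiv_apply' hu] at this
  have h3 : HasDerivAt (fun s => fderiv ℝ u (s, xm s) (0, 1))
      (A (1,0) (0,1) + -cc * A (0,1) (0,1)) τ := by
    have := hasDerivAt_curve' (f := fun q => fderiv ℝ u q (0, 1))
      ((hux_cd.differentiable (by norm_num)) p) hxm
    rwa [fderiv_fderiv_apply' hu, fderiv_fderiv_apply' hu] at this
  have hF : HasDerivAt (fun s => fderiv ℝ u (s, xm s) (1, 0)
        + c (u (s, xm s)) * fderiv ℝ u (s, xm s) (0, 1))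
      ((A (1,0) (1,0) + -cc * A (0,1) (1,0))
        + (cp * (utp + -cc * uxp) * uxp + cc * (A (1,0) (0,1) + -cc * A (0,1) (0,1)))) τ :=
    h1.add (hcU.mul h3)
  have hFval : (A (1,0) (1,0) + -cc * A (0,1) (1,0))
        + (cp * (utp + -cc * uxp) * uxp + cc * (A (1,0) (0,1) + -cc * A (0,1) (0,1)))
      = cp * (utp - cc * uxp) * uxp := by
    linear_combination hwaveA - cc * hsym
  rw [hFval] at hF
  -- sqrt part
  set h : ℝ := Real.sqrt cc with hhdef
  have hpos : 0 < h := Real.sqrt_pos.mpr hcc0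
  have hsqcc : h ^ 2 = cc := Real.sq_sqrt hcc0.le
  have hsqrt : HasDerivAt (fun s => Real.sqrt (c (u (s, xm s))))
      (1 / (2 * h) * (cp * (utp + -cc * uxp))) τ :=
    (Real.hasDerivAt_sqrt hcc0.ne').comp τ hcU
  have hg : HasDerivAt (fun s => (fderiv ℝ u (s, xm s) (1, 0)
        + c (u (s, xm s)) * fderiv ℝ u (s, xm s) (0, 1)) / Real.sqrt (c (u (s, xm s))))
      ((cp * (utp - cc * uxp) * uxp * h
        - (utp + cc * uxp) * (1 / (2 * h) * (cp * (utp + -cc * uxp)))) / h ^ 2) τ :=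
    hF.div hsqrt hpos.ne'
  have hgfun : (fun s => Rv c u (s, xm s) / Real.sqrt (c (u (s, xm s))))
      = (fun s => (fderiv ℝ u (s, xm s) (1, 0)
        + c (u (s, xm s)) * fderiv ℝ u (s, xm s) (0, 1)) / Real.sqrt (c (u (s, xm s)))) := by
    funext s
    simp only [Rv, e1, e2]
  refine ⟨_, ?_, hgfun ▸ hg⟩
  -- nonpositivity
  set S : ℝ := utp - cc * uxp with hS
  have hnum : (cp * S * uxp * h - (utp + cc * uxp) * (1 / (2 * h) * (cp * (utp + -cc * uxp))))
      = -(cp * S ^ 2) / (2 * h) := by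
    rw [eq_div_iff (by positivity)]
    field_simp
    linear_combination (2 * uxp * cp * S) * hsqcc
  rw [hnum]
  apply div_nonpos_of_nonpos_of_nonneg _ (sq_nonneg h)
  apply div_nonpos_of_nonpos_of_nonneg _ (by positivity)
  simp only [neg_nonpos]
  positivity

theorem stmt6 (c : ℝ → ℝ) (u : ℝ × ℝ → ℝ) (clow chigh T t x₀ : ℝ) (xm : ℝ → ℝ)
    (hc : ContDiff ℝ 1 c)
    (hclow : 0 < clow)
    (hcbd : ∀ θ, clow ≤ c θ ∧ c θ ≤ chigh)
    (hcmono : ∀ θ, 0 ≤ deriv c θ)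
    (hT : 0 < T)
    (hu : ContDiff ℝ 2 u)
    (hwave : ∀ p : ℝ × ℝ, p.1 ∈ Set.Icc 0 T →
      pdt (pdt u) p = (c (u p)) ^ 2 * pdx (pdx u) p)
    (hM : BddAbove (Set.range fun z : ℝ => max (Rv c u (0, z)) 0))
    (ht : t ∈ Set.Ioc 0 T)
    (hxm : ∀ τ ∈ Set.Icc 0 t, HasDerivAt xm (-(c (u (τ, xm τ)))) τ)
    (hxmt : xm t = x₀) :
    Rv c u (t, x₀) ≤ Real.sqrt (chigh / clow) * (⨆ z : ℝ, max (Rv c u (0, z)) 0) := by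
  set g : ℝ → ℝ := fun s => Rv c u (s, xm s) / Real.sqrt (c (u (s, xm s))) with hgdef
  have key : ∀ τ ∈ Set.Icc 0 t, ∃ d, d ≤ 0 ∧ HasDerivAt g d τ := by
    intro τ hτ
    exact gderiv c u clow xm τ hc hclow (fun θ => (hcbd θ).1) hcmono hu
      (hwave (τ, xm τ) ⟨hτ.1, hτ.2.trans ht.2⟩) (hxm τ hτ)
  have anti : AntitoneOn g (Set.Icc 0 t) := by
    apply antitoneOn_of_deriv_nonpos (convex_Icc 0 t)
    · intro τ hτ
      exact ((key τ hτ).choose_spec.2).continuousAt.continuousWithinAt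
    · rw [interior_Icc]
      intro τ hτ
      exact ((key τ (Set.Ioo_subset_Icc_self hτ)).choose_spec.2).differentiableAt.differentiableWithinAt
    · rw [interior_Icc]
      intro τ hτ
      obtain ⟨d, hd0, hD⟩ := key τ (Set.Ioo_subset_Icc_self hτ)
      rw [hD.deriv]; exact hd0
  have hgt : g t ≤ g 0 :=
    anti ⟨le_rfl, ht.1.le⟩ ⟨ht.1.le, le_rfl⟩ ht.1.le
  -- arithmetic
  set M : ℝ := ⨆ z : ℝ, max (Rv c u (0, z)) 0 with hMdef
  have hMz : ∀ z, max (Rv c u (0, z)) 0 ≤ M := fun z => le_ciSup hM z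
  have hM0 : (0:ℝ) ≤ M := le_trans (le_max_right _ _) (hMz 0)
  have hR0M : Rv c u (0, xm 0) ≤ M := le_trans (le_max_left _ _) (hMz (xm 0))
  have hc10 : 0 < c (u (t, x₀)) := lt_of_lt_of_le hclow (hcbd _).1
  have hc00 : 0 < c (u (0, xm 0)) := lt_of_lt_of_le hclow (hcbd _).1
  have hs1 : 0 < Real.sqrt (c (u (t, x₀))) := Real.sqrt_pos.mpr hc10
  have hs0 : 0 < Real.sqrt (c (u (0, xm 0))) := Real.sqrt_pos.mpr hc00
  have hsl : 0 < Real.sqrt clow := Real.sqrt_pos.mpr hclow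
  have h1 : Rv c u (t, x₀) / Real.sqrt (c (u (t, x₀)))
      ≤ Rv c u (0, xm 0) / Real.sqrt (c (u (0, xm 0))) := by
    simpa [hgdef, hxmt] using hgt
  have h2 : Rv c u (0, xm 0) / Real.sqrt (c (u (0, xm 0)))
      ≤ M / Real.sqrt (c (u (0, xm 0))) :=
    div_le_div_of_nonneg_right hR0M hs0.le
  have h3 : M / Real.sqrt (c (u (0, xm 0))) ≤ M / Real.sqrt clow :=
    div_le_div_of_nonneg_left hM0 hsl (Real.sqrt_le_sqrt (hcbd _).1)
  have h4 : Rv c u (t, x₀) ≤ Real.sqrt (c (u (t, x₀))) * (M / Real.sqrt clow) := by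
    rw [← div_le_iff₀' hs1]
    exact (h1.trans h2).trans h3
  have h5 : Real.sqrt (c (u (t, x₀))) * (M / Real.sqrt clow)
      ≤ Real.sqrt chigh * (M / Real.sqrt clow) :=
    mul_le_mul_of_nonneg_right (Real.sqrt_le_sqrt (hcbd _).2)
      (div_nonneg hM0 hsl.le)
  have hch0 : (0:ℝ) ≤ chigh := le_trans hclow.le ((hcbd 0).1.trans (hcbd 0).2)
  calc Rv c u (t, x₀) ≤ Real.sqrt chigh * (M / Real.sqrt clow) := h4.trans h5
    _ = Real.sqrt (chigh / clow) * M := by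
        rw [Real.sqrt_div hch0]; ring
end
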